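/- arXiv:1210.1757 — 3 statements merged into one kernel-verified Lean document; each statement's English description precedes it below -/
import Mathlib

section
/- For every real v > 1/2 and every tie-breaking rule, the AND–OR game has no pure Nash equilibrium: there is no pair of bids a ∈ [0,H]×[0,H] and b ∈ [0,H]×[0,H] such that u_and(a', b) ≤ u_and(a, b) for all a' ∈ [0,H]×[0,H] and u_or(a, b') ≤ u_or(a, b) for all b' ∈ [0,H]×[0,H]. -/
open MeasureTheory Set
open scoped ENNReal

noncomputable section

/-- A bid profile for one player: a bid on each of the two items. -/
abbrev Bid := ℝ × ℝ

/-- The maximum allowed bid `H = max 1 v`. -/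
def Hval (v : ℝ) : ℝ := max 1 v

/-- The set of allowed bids `[0,H] × [0,H]`. -/
def box (v : ℝ) : Set Bid := Icc (0:ℝ) (Hval v) ×ˢ Icc (0:ℝ) (Hval v)

/-- A tie-breaking rule: measurable functions `t₁ t₂ : ℝ → [0,1]`, where `tᵢ x` is the
probability that AND wins item `i` when both players bid `x` on it. -/
structure TieRule where
  t1 : ℝ → ℝ
  t2 : ℝ → ℝ
  meas1 : Measurable t1
  meas2 : Measurable t2
  t1_nonneg : ∀ x, 0 ≤ t1 x
  t1_le_one : ∀ x, t1 x ≤ 1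
  t2_nonneg : ∀ x, 0 ≤ t2 x
  t2_le_one : ∀ x, t2 x ≤ 1

/-- Probability that AND wins item 1 with bids `a` (AND) and `b` (OR). -/
def q1 (T : TieRule) (a b : Bid) : ℝ :=
  if b.1 < a.1 then 1 else if a.1 = b.1 then T.t1 a.1 else 0

/-- Probability that AND wins item 2 with bids `a` (AND) and `b` (OR). -/
def q2 (T : TieRule) (a b : Bid) : ℝ :=
  if b.2 < a.2 then 1 else if a.2 = b.2 then T.t2 a.2 else 0

/-- Expected utility of the AND player at the pure profile `(a,b)`. -/
def uAnd (T : TieRule) (a b : Bid) : ℝ :=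
  q1 T a b * q2 T a b - a.1 * q1 T a b - a.2 * q2 T a b

/-- Expected utility of the OR player at the pure profile `(a,b)`. -/
def uOr (v : ℝ) (T : TieRule) (a b : Bid) : ℝ :=
  v * (1 - q1 T a b * q2 T a b) - b.1 * (1 - q1 T a b) - b.2 * (1 - q2 T a b)

/-- A mixed strategy: a Borel probability measure on `ℝ × ℝ` supported in the box. -/
def IsMixed (v : ℝ) (μ : Measure Bid) : Prop :=
  IsProbabilityMeasure μ ∧ μ (box v) = 1

/-- Expected utility of AND under mixed strategies. -/
def UAnd (T : TieRule) (μ ν : Measure Bid) : ℝ :=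
  ∫ p, uAnd T p.1 p.2 ∂(μ.prod ν)

/-- Expected utility of OR under mixed strategies. -/
def UOr (v : ℝ) (T : TieRule) (μ ν : Measure Bid) : ℝ :=
  ∫ p, uOr v T p.1 p.2 ∂(μ.prod ν)

/-- `(μ,ν)` is a mixed Nash equilibrium of the AND–OR game. -/
def IsNash (v : ℝ) (T : TieRule) (μ ν : Measure Bid) : Prop :=
  IsMixed v μ ∧ IsMixed v ν ∧
  (∀ a ∈ box v, (∫ b, uAnd T a b ∂ν) ≤ UAnd T μ ν) ∧
  (∀ b ∈ box v, (∫ a, uOr v T a b ∂μ) ≤ UOr v T μ ν)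

/-- The uniform probability measure on `[0,1] ⊆ ℝ`. -/
def P01 : Measure ℝ := volume.restrict (Icc (0:ℝ) 1)

/-- The OR equilibrium strategy `ν*`: bid `(x,0)` or `(0,x)` with probability `1/2` each,
where `x ∈ [0,1/2]` has CDF `x/(1-x)`. -/
def nuStar : Measure Bid :=
  (1/2 : ℝ≥0∞) • Measure.map (fun u => (u/(1+u), (0:ℝ))) P01 +
  (1/2 : ℝ≥0∞) • Measure.map (fun u => ((0:ℝ), u/(1+u))) P01

/-- Inverse-CDF map for the AND equilibrium bid distribution. -/
def gAnd (v u : ℝ) : ℝ := if 0 < u then max 0 (v - (v - 1/2)/u) else 0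

/-- The AND equilibrium strategy `μ*`: bid `(y,y)` where `y ∈ [0,1/2]` has CDF
`(v-1/2)/(v-y)`, with an atom of mass `1 - 1/(2v)` at `0`. -/
def muStar (v : ℝ) : Measure Bid := Measure.map (fun u => (gAnd v u, gAnd v u)) P01

/-! The bids on each item must coincide, since otherwise the winner of the item could shade
its bid. With common bids `(p, s)` and tie probabilities `τ₁, τ₂`, OR can outbid on item 1
at a price arbitrarily close to `p`, which forces `v τ₁ τ₂ ≤ p τ₁`; symmetrically
`v τ₁ τ₂ ≤ s τ₂`. Since AND can guarantee `0` by bidding nothing,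
`τ₁ τ₂ ≥ p τ₁ + s τ₂ ≥ 2 v τ₁ τ₂`, so for `v > 1/2` all these terms vanish and OR gets
`v - p - s`. Outbidding on one item alone then forces `p = s = 0`, but against zero bids
AND wins both items with bids `(1/4, 1/4)`. -/

structure IsPureNash (v : ℝ) (T : TieRule) (a b : Bid) : Prop where
  mem_and : a ∈ box v
  mem_or : b ∈ box v
  and_best : ∀ a' ∈ box v, uAnd T a' b ≤ uAnd T a b
  or_best : ∀ b' ∈ box v, uOr v T a b' ≤ uOr v T a b

lemma one_le_Hval (v : ℝ) : 1 ≤ Hval v := le_max_left _ _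

lemma le_Hval (v : ℝ) : v ≤ Hval v := le_max_right _ _

lemma zero_mem_box (v : ℝ) : (0 : Bid) ∈ box v := by
  have h0H : (0 : ℝ) ≤ Hval v := zero_le_one.trans (one_le_Hval v)
  exact mk_mem_prod ⟨le_rfl, h0H⟩ ⟨le_rfl, h0H⟩

lemma swap_mem_box {v : ℝ} {a : Bid} : a.swap ∈ box v ↔ a ∈ box v := by
  simp only [box, mem_prod, Prod.fst_swap, Prod.snd_swap, and_comm]

def TieRule.swap (T : TieRule) : TieRule where
  t1 := T.t2
  t2 := T.t1
  meas1 := T.meas2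
  meas2 := T.meas1
  t1_nonneg := T.t2_nonneg
  t1_le_one := T.t2_le_one
  t2_nonneg := T.t1_nonneg
  t2_le_one := T.t1_le_one

section Allocation

variable (T : TieRule) {a b : Bid}

lemma q1_swap : q1 T.swap a.swap b.swap = q2 T a b := rfl

lemma q2_swap : q2 T.swap a.swap b.swap = q1 T a b := rfl

lemma q1_eq_one (h : b.1 < a.1) : q1 T a b = 1 := if_pos h

lemma q1_eq_zero (h : a.1 < b.1) : q1 T a b = 0 := by
  rw [q1, if_neg h.le.not_gt, if_neg h.ne]

lemma q1_nonneg (a b : Bid) : 0 ≤ q1 T a b := by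
  unfold q1
  split_ifs
  exacts [zero_le_one, T.t1_nonneg _, le_rfl]

lemma q1_le_one (a b : Bid) : q1 T a b ≤ 1 := by
  unfold q1
  split_ifs
  exacts [le_rfl, T.t1_le_one _, zero_le_one]

lemma q2_eq_one (h : b.2 < a.2) : q2 T a b = 1 := q1_eq_one T.swap (a := a.swap) (b := b.swap) h

lemma q2_nonneg (a b : Bid) : 0 ≤ q2 T a b := q1_nonneg T.swap a.swap b.swap

lemma q2_le_one (a b : Bid) : q2 T a b ≤ 1 := q1_le_one T.swap a.swap b.swap

end Allocation

section Utilities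

variable {v : ℝ} (T : TieRule) {a b : Bid}

lemma uAnd_swap : uAnd T.swap a.swap b.swap = uAnd T a b := by
  simp only [uAnd, q1_swap, q2_swap, Prod.fst_swap, Prod.snd_swap]
  ring

lemma uOr_swap : uOr v T.swap a.swap b.swap = uOr v T a b := by
  simp only [uOr, q1_swap, q2_swap, Prod.fst_swap, Prod.snd_swap]
  ring

lemma uAnd_of_fst_lt (h : b.1 < a.1) : uAnd T a b = q2 T a b - a.1 - a.2 * q2 T a b := by
  simp only [uAnd, q1_eq_one T h]
  ring

lemma uAnd_of_lt_of_lt (h₁ : b.1 < a.1) (h₂ : b.2 < a.2) : uAnd T a b = 1 - a.1 - a.2 := by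
  simp only [uAnd_of_fst_lt T h₁, q2_eq_one T h₂]
  ring

lemma uOr_of_fst_lt (h : a.1 < b.1) :
    uOr v T a b = v - b.1 - b.2 * (1 - q2 T a b) := by
  simp only [uOr, q1_eq_zero T h]
  ring

lemma uAnd_zero_nonneg (b : Bid) : 0 ≤ uAnd T 0 b := by
  simp only [uAnd, Prod.fst_zero, Prod.snd_zero, zero_mul, sub_zero]
  exact mul_nonneg (q1_nonneg T _ _) (q2_nonneg T _ _)

lemma uOr_zero_nonneg (hv : 0 ≤ v) (a : Bid) : 0 ≤ uOr v T a 0 := by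
  simp only [uOr, Prod.fst_zero, Prod.snd_zero, zero_mul, sub_zero]
  refine mul_nonneg hv (sub_nonneg.2 ?_)
  exact mul_le_one₀ (q1_le_one T _ _) (q2_nonneg T _ _) (q2_le_one T _ _)

end Utilities

namespace IsPureNash

variable {v : ℝ} {T : TieRule} {a b : Bid}

lemma swap (h : IsPureNash v T a b) : IsPureNash v T.swap a.swap b.swap where
  mem_and := swap_mem_box.2 h.mem_and
  mem_or := swap_mem_box.2 h.mem_or
  and_best a' ha' := by
    rw [← Prod.swap_swap a', uAnd_swap, uAnd_swap]
    exact h.and_best _ (swap_mem_box.2 ha')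
  or_best b' hb' := by
    rw [← Prod.swap_swap b', uOr_swap, uOr_swap]
    exact h.or_best _ (swap_mem_box.2 hb')

lemma fst_le (h : IsPureNash v T a b) : a.1 ≤ b.1 := by
  by_contra! hba
  obtain ⟨⟨-, ha₁H⟩, ha₂⟩ := h.mem_and
  obtain ⟨⟨hb₁, -⟩, -⟩ := h.mem_or
  obtain ⟨m, hm, hma⟩ := exists_between hba
  have hdev := h.and_best (m, a.2) (mk_mem_prod ⟨by linarith, by linarith⟩ ha₂)
  have hq : q2 T (m, a.2) b = q2 T a b := rfl
  rw [uAnd_of_fst_lt T hm, uAnd_of_fst_lt T hba, hq] at hdev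
  dsimp only at hdev
  linarith

lemma le_fst (h : IsPureNash v T a b) : b.1 ≤ a.1 := by
  by_contra! hab
  obtain ⟨⟨ha₁, -⟩, -⟩ := h.mem_and
  obtain ⟨⟨-, hb₁H⟩, hb₂⟩ := h.mem_or
  obtain ⟨m, hm, hmb⟩ := exists_between hab
  have hdev := h.or_best (m, b.2) (mk_mem_prod ⟨by linarith, by linarith⟩ hb₂)
  have hq : q2 T a (m, b.2) = q2 T a b := rfl
  rw [uOr_of_fst_lt T hm, uOr_of_fst_lt T hab, hq] at hdev
  dsimp only at hdev
  linarith

lemma eq (h : IsPureNash v T a b) : a = b :=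
  Prod.ext (h.fst_le.antisymm h.le_fst) (h.swap.fst_le.antisymm h.swap.le_fst)

lemma one_sub_le_uAnd (h : IsPureNash v T a b) {c : Bid} (hc : c ∈ box v)
    (h₁ : b.1 < c.1) (h₂ : b.2 < c.2) : 1 - c.1 - c.2 ≤ uAnd T a b :=
  uAnd_of_lt_of_lt T h₁ h₂ ▸ h.and_best c hc

lemma outbid_fst_le_uOr (hv : 0 ≤ v) (h : IsPureNash v T a b) {c : Bid} (hc : c ∈ box v) :
    v - a.1 - c.2 * (1 - q2 T a c) ≤ uOr v T a b := by
  obtain ⟨⟨ha₁, ha₁H⟩, -⟩ := h.mem_and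
  rcases ha₁H.lt_or_eq with hlt | heq
  · have hdev : ∀ x ∈ Ioc a.1 (Hval v), v - c.2 * (1 - q2 T a c) - uOr v T a b ≤ x := by
      rintro x ⟨hx, hxH⟩
      have hq : q2 T a (x, c.2) = q2 T a c := rfl
      have := h.or_best (x, c.2) (mk_mem_prod ⟨by linarith, hxH⟩ hc.2)
      rw [uOr_of_fst_lt T hx, hq] at this
      dsimp only at this
      linarith
    have hmem : a.1 ∈ closure (Ioc a.1 (Hval v)) := by
      rw [closure_Ioc hlt.ne]
      exact left_mem_Icc.2 hlt.le
    have := isClosed_Ici.closure_subset_iff.2 hdev hmem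
    simp only [mem_Ici] at this
    linarith
  · have hcost : 0 ≤ c.2 * (1 - q2 T a c) := mul_nonneg hc.2.1 (sub_nonneg.2 (q2_le_one T _ _))
    linarith [le_Hval v, uOr_zero_nonneg T hv a, h.or_best 0 (zero_mem_box v)]

variable {a : Bid}

lemma mul_q_le_fst (hv : 0 ≤ v) (h : IsPureNash v T a a) :
    v * (q1 T a a * q2 T a a) ≤ a.1 * q1 T a a := by
  have := h.outbid_fst_le_uOr hv h.mem_and
  rw [uOr] at this
  linarith

lemma mul_q_le_snd (hv : 0 ≤ v) (h : IsPureNash v T a a) :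
    v * (q1 T a a * q2 T a a) ≤ a.2 * q2 T a a :=
  calc v * (q1 T a a * q2 T a a) = v * (q2 T a a * q1 T a a) := by ring
    _ ≤ a.2 * q2 T a a := h.swap.mul_q_le_fst hv

lemma uAnd_eq_zero_and_uOr_eq (hv : 1/2 < v) (h : IsPureNash v T a a) :
    uAnd T a a = 0 ∧ uOr v T a a = v - a.1 - a.2 := by
  obtain ⟨⟨ha₁, -⟩, ha₂, -⟩ := h.mem_and
  have hq₁ := q1_nonneg T a a
  have hq₂ := q2_nonneg T a a
  have hand : 0 ≤ uAnd T a a := (uAnd_zero_nonneg T a).trans (h.and_best 0 (zero_mem_box v))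
  have h₁ := h.mul_q_le_fst (by linarith)
  have h₂ := h.mul_q_le_snd (by linarith)
  rw [uAnd] at hand
  have hboth : q1 T a a * q2 T a a = 0 := by nlinarith [mul_nonneg hq₁ hq₂]
  have hpay₁ : a.1 * q1 T a a = 0 := by nlinarith [mul_nonneg ha₁ hq₁, mul_nonneg ha₂ hq₂]
  have hpay₂ : a.2 * q2 T a a = 0 := by nlinarith [mul_nonneg ha₁ hq₁, mul_nonneg ha₂ hq₂]
  constructor
  · rw [uAnd, hboth, hpay₁, hpay₂]
    ring
  · rw [uOr]
    linear_combination (-v) * hboth + hpay₁ + hpay₂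

lemma snd_eq_zero (hv : 1/2 < v) (h : IsPureNash v T a a) : a.2 = 0 := by
  have := h.outbid_fst_le_uOr (by linarith) (zero_mem_box v)
  rw [(h.uAnd_eq_zero_and_uOr_eq hv).2] at this
  simp only [Prod.snd_zero, zero_mul, sub_zero] at this
  linarith [h.mem_and.2.1]

lemma fst_eq_zero (hv : 1/2 < v) (h : IsPureNash v T a a) : a.1 = 0 :=
  h.swap.snd_eq_zero hv

end IsPureNash

/-- For every `v > 1/2` and every tie-breaking rule, the AND–OR game has
no pure Nash equilibrium. -/
theorem no_pure_nash (v : ℝ) (hv : 1/2 < v) (T : TieRule) :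
    ¬ ∃ a ∈ box v, ∃ b ∈ box v,
        (∀ a' ∈ box v, uAnd T a' b ≤ uAnd T a b) ∧
        (∀ b' ∈ box v, uOr v T a b' ≤ uOr v T a b) := by
  rintro ⟨a, ha, b, hb, hand, hor⟩
  have h : IsPureNash v T a b := ⟨ha, hb, hand, hor⟩
  obtain rfl := h.eq
  have hquarter : ((1/4 : ℝ), (1/4 : ℝ)) ∈ box v := by
    have h14 : (1/4 : ℝ) ∈ Icc 0 (Hval v) := ⟨by norm_num, by linarith [one_le_Hval v]⟩
    exact mk_mem_prod h14 h14
  have hwin := h.one_sub_le_uAnd hquarter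
    (by rw [h.fst_eq_zero hv]; norm_num) (by rw [h.snd_eq_zero hv]; norm_num)
  linarith [(h.uAnd_eq_zero_and_uOr_eq hv).1]
end
end

section
/- Let 0 < v ≤ 1/2, let the tie-breaking rule be t₁ = t₂ = (constant function 1) (AND wins all ties), and let p be any real with v ≤ p ≤ 1/2. Then the pure profile in which both players bid (p,p) is a pure Nash equilibrium of the AND–OR game: u_and(a', ((p,p))) ≤ u_and((p,p),(p,p)) for all a' ∈ [0,H]×[0,H] and u_or((p,p), b') ≤ u_or((p,p),(p,p)) for all b' ∈ [0,H]×[0,H]; in this equilibrium AND wins both items and u_and((p,p),(p,p)) = 1 − 2p. -/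
open MeasureTheory Set
open scoped ENNReal

noncomputable section

/-- For `0 < v ≤ 1/2`, tie-breaking always in favor of AND, and any
`p ∈ [v, 1/2]`, both players bidding `(p,p)` is a pure Nash equilibrium in which
AND wins both items and gets utility `1 - 2p`. -/
theorem pure_nash_small_v (v : ℝ) (hv0 : 0 < v) (hv : v ≤ 1/2) (T : TieRule)
    (hT1 : T.t1 = fun _ => 1) (hT2 : T.t2 = fun _ => 1)
    (p : ℝ) (hp1 : v ≤ p) (hp2 : p ≤ 1/2) :
    (∀ a' ∈ box v, uAnd T a' (p, p) ≤ uAnd T (p, p) (p, p)) ∧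
    (∀ b' ∈ box v, uOr v T (p, p) b' ≤ uOr v T (p, p) (p, p)) ∧
    q1 T (p, p) (p, p) = 1 ∧ q2 T (p, p) (p, p) = 1 ∧
    uAnd T (p, p) (p, p) = 1 - 2 * p := by

  have hq1 : ∀ a b : Bid, q1 T a b = if b.1 ≤ a.1 then 1 else 0 := by
    intro a b
    simp only [q1, hT1]
    rcases lt_trichotomy b.1 a.1 with h | h | h
    · simp [h, le_of_lt h]
    · simp [h, lt_irrefl]
    · simp [not_lt.2 (le_of_lt h), not_le.2 h, ne_of_lt h]
  have hq2 : ∀ a b : Bid, q2 T a b = if b.2 ≤ a.2 then 1 else 0 := by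
    intro a b
    simp only [q2, hT2]
    rcases lt_trichotomy b.2 a.2 with h | h | h
    · simp [h, le_of_lt h]
    · simp [h, lt_irrefl]
    · simp [not_lt.2 (le_of_lt h), not_le.2 h, ne_of_lt h]
  have hpp1 : q1 T (p,p) (p,p) = 1 := by rw [hq1]; simp
  have hpp2 : q2 T (p,p) (p,p) = 1 := by rw [hq2]; simp
  have hEq : uAnd T (p,p) (p,p) = 1 - 2 * p := by
    simp [uAnd, hpp1, hpp2]; ring
  refine ⟨?_, ?_, hpp1, hpp2, hEq⟩
  · rintro ⟨a1, a2⟩ ⟨⟨h10, h1H⟩, ⟨h20, h2H⟩⟩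
    rw [hEq]
    simp only [uAnd, hq1, hq2]
    by_cases h1 : p ≤ a1 <;> by_cases h2 : p ≤ a2 <;> simp [h1, h2] <;> nlinarith
  · rintro ⟨b1, b2⟩ ⟨⟨h10, h1H⟩, ⟨h20, h2H⟩⟩
    simp only [uOr, hq1, hq2]
    by_cases h1 : b1 ≤ p <;> by_cases h2 : b2 ≤ p <;> simp [h1, h2] <;> nlinarith
end
end

section
/- For every real v > 1/2 and every tie-breaking rule, if (μ, ν) is a mixed Nash equilibrium of the AND–OR game then the highest bids of the two players on each item coincide: for every x ∈ ℝ, μ{p : p.1 ≤ x} = 1 if and only if ν{p : p.1 ≤ x} = 1, and μ{p : p.2 ≤ x} = 1 if and only if ν{p : p.2 ≤ x} = 1. -/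
/-!
In an equilibrium almost every bid of a player is a best response: no bid in the box does better
than the equilibrium payoff, and the bids average to it. If one player almost surely bids at most
`x` on an item, then a bid `c > x` of the other player on that item wins it for sure, and so does
the bid `(x + c) / 2`, which is strictly cheaper and changes nothing on the other item. Hence no
best response bids above `x` there, and the other player's bids on that item are almost surely at
most `x` as well.
-/

open MeasureTheory Set
open scoped ENNReal

noncomputable section

section Utility

variable (T : TieRule)

lemma q1_mem_Icc (a b : Bid) : q1 T a b ∈ Icc (0 : ℝ) 1 := by
  unfold q1; split_ifs
  exacts [⟨zero_le_one, le_rfl⟩, ⟨T.t1_nonneg _, T.t1_le_one _⟩, ⟨le_rfl, zero_le_one⟩]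

lemma q2_mem_Icc (a b : Bid) : q2 T a b ∈ Icc (0 : ℝ) 1 := by
  unfold q2; split_ifs
  exacts [⟨zero_le_one, le_rfl⟩, ⟨T.t2_nonneg _, T.t2_le_one _⟩, ⟨le_rfl, zero_le_one⟩]

lemma measurable_q1 : Measurable fun p : Bid × Bid => q1 T p.1 p.2 := by
  unfold q1
  refine Measurable.ite (measurableSet_lt (by fun_prop) (by fun_prop)) measurable_const
    (Measurable.ite (measurableSet_eq_fun (by fun_prop) (by fun_prop))
      (T.meas1.comp (by fun_prop)) measurable_const)

lemma measurable_q2 : Measurable fun p : Bid × Bid => q2 T p.1 p.2 := by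
  unfold q2
  refine Measurable.ite (measurableSet_lt (by fun_prop) (by fun_prop)) measurable_const
    (Measurable.ite (measurableSet_eq_fun (by fun_prop) (by fun_prop))
      (T.meas2.comp (by fun_prop)) measurable_const)

lemma measurable_uAnd : Measurable fun p : Bid × Bid => uAnd T p.1 p.2 := by
  have := measurable_q1 T; have := measurable_q2 T
  unfold uAnd; fun_prop

lemma measurable_uOr (v : ℝ) : Measurable fun p : Bid × Bid => uOr v T p.1 p.2 := by
  have := measurable_q1 T; have := measurable_q2 T
  unfold uOr; fun_prop

lemma abs_uAnd_le (a b : Bid) : |uAnd T a b| ≤ 1 + |a.1| + |a.2| := by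
  obtain ⟨h1, h1'⟩ := q1_mem_Icc T a b
  obtain ⟨h2, h2'⟩ := q2_mem_Icc T a b
  unfold uAnd
  rw [abs_le]; constructor <;>
    nlinarith [abs_nonneg a.1, abs_nonneg a.2, le_abs_self a.1, neg_abs_le a.1,
      le_abs_self a.2, neg_abs_le a.2, mul_nonneg h1 h2, mul_le_one₀ h1' h2 h2']

lemma abs_uOr_le (v : ℝ) (a b : Bid) : |uOr v T a b| ≤ |v| + |b.1| + |b.2| := by
  obtain ⟨h1, h1'⟩ := q1_mem_Icc T a b
  obtain ⟨h2, h2'⟩ := q2_mem_Icc T a b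
  unfold uOr
  rw [abs_le]; constructor <;>
    nlinarith [abs_nonneg b.1, abs_nonneg b.2, le_abs_self b.1, neg_abs_le b.1,
      le_abs_self b.2, neg_abs_le b.2, le_abs_self v, neg_abs_le v,
      mul_nonneg h1 h2, mul_le_one₀ h1' h2 h2']

end Utility

section Deviation

variable (T : TieRule) {x y : ℝ} {a b : Bid}

lemma uAnd_lower_fst (hb : b.1 ≤ x) (hy : x < y) (ha : x < a.1) :
    uAnd T (y, a.2) b = uAnd T a b + (a.1 - y) := by
  have hq : ∀ c : Bid, x < c.1 → q1 T c b = 1 := fun c hc => if_pos (hb.trans_lt hc)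
  have hq2 : q2 T (y, a.2) b = q2 T a b := rfl
  simp only [uAnd, hq (y, a.2) hy, hq a ha, hq2]; ring

lemma uAnd_lower_snd (hb : b.2 ≤ x) (hy : x < y) (ha : x < a.2) :
    uAnd T (a.1, y) b = uAnd T a b + (a.2 - y) := by
  have hq : ∀ c : Bid, x < c.2 → q2 T c b = 1 := fun c hc => if_pos (hb.trans_lt hc)
  have hq1 : q1 T (a.1, y) b = q1 T a b := rfl
  simp only [uAnd, hq (a.1, y) hy, hq a ha, hq1]; ring

lemma uOr_lower_fst (v : ℝ) (ha : a.1 ≤ x) (hy : x < y) (hb : x < b.1) :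
    uOr v T a (y, b.2) = uOr v T a b + (b.1 - y) := by
  have hq : ∀ c : Bid, x < c.1 → q1 T a c = 0 := fun c hc =>
    (if_neg (ha.trans_lt hc).not_gt).trans (if_neg (ha.trans_lt hc).ne)
  have hq2 : q2 T a (y, b.2) = q2 T a b := rfl
  simp only [uOr, hq (y, b.2) hy, hq b hb, hq2]; ring

lemma uOr_lower_snd (v : ℝ) (ha : a.2 ≤ x) (hy : x < y) (hb : x < b.2) :
    uOr v T a (b.1, y) = uOr v T a b + (b.2 - y) := by
  have hq : ∀ c : Bid, x < c.2 → q2 T a c = 0 := fun c hc =>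
    (if_neg (ha.trans_lt hc).not_gt).trans (if_neg (ha.trans_lt hc).ne)
  have hq1 : q1 T a (b.1, y) = q1 T a b := rfl
  simp only [uOr, hq (b.1, y) hy, hq b hb, hq1]; ring

end Deviation

section Measure

variable {α : Type*} [MeasurableSpace α]

lemma measure_eq_one_iff_ae {μ : Measure α} [IsProbabilityMeasure μ] {p : α → Prop}
    (hp : MeasurableSet {a | p a}) : μ {a | p a} = 1 ↔ ∀ᵐ a ∂μ, p a := by
  rw [ae_iff_measure_eq hp.nullMeasurableSet, measure_univ]

lemma ae_eq_of_forall_le_of_integral_eq {μ : Measure α} [IsProbabilityMeasure μ] {F : α → ℝ}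
    {U : ℝ} {s : Set α} (hF : Integrable F μ) (hs : ∀ᵐ a ∂μ, a ∈ s) (hle : ∀ a ∈ s, F a ≤ U)
    (hU : ∫ a, F a ∂μ = U) : ∀ᵐ a ∂μ, F a = U :=
  (integral_eq_iff_of_ae_le hF (integrable_const U) (hs.mono hle)).1 (by simpa using hU)

lemma integral_eq_integral_add_of_ae_eq_add {μ : Measure α} [IsProbabilityMeasure μ]
    {f g : α → ℝ} {c : ℝ} (hf : Integrable f μ) (h : ∀ᵐ a ∂μ, g a = f a + c) :
    ∫ a, g a ∂μ = ∫ a, f a ∂μ + c := by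
  rw [integral_congr_ae h, integral_add hf (integrable_const c), integral_const, probReal_univ,
    one_smul]

lemma ae_le_of_exists_better {μ : Measure α} {F : α → ℝ} {U : ℝ} {s : Set α} {c : α → ℝ}
    {x : ℝ} (hbest : ∀ᵐ a ∂μ, F a = U) (hs : ∀ᵐ a ∂μ, a ∈ s) (hle : ∀ a ∈ s, F a ≤ U)
    (hbetter : ∀ a ∈ s, x < c a → ∃ a' ∈ s, F a < F a') : ∀ᵐ a ∂μ, c a ≤ x := by
  filter_upwards [hbest, hs] with a haU has
  by_contra! hxa
  obtain ⟨a', ha's, hlt⟩ := hbetter a has hxa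
  linarith [hle a' ha's]

end Measure

section Integrability

variable (T : TieRule) {v : ℝ}

lemma measurableSet_box : MeasurableSet (box v) :=
  measurableSet_Icc.prod measurableSet_Icc

lemma IsMixed.ae_mem_box {μ : Measure Bid} (hμ : IsMixed v μ) : ∀ᵐ a ∂μ, a ∈ box v := by
  have := hμ.1
  exact (ae_mem_iff_measure_eq measurableSet_box.nullMeasurableSet).2
    (by rw [hμ.2, measure_univ])

lemma abs_le_Hval_of_mem_box {a : Bid} (ha : a ∈ box v) : |a.1| ≤ Hval v ∧ |a.2| ≤ Hval v :=
  ⟨(abs_of_nonneg ha.1.1).trans_le ha.1.2, (abs_of_nonneg ha.2.1).trans_le ha.2.2⟩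

lemma integrable_uAnd_right (a : Bid) (ν : Measure Bid) [IsFiniteMeasure ν] :
    Integrable (fun b => uAnd T a b) ν :=
  .of_bound ((measurable_uAnd T).comp measurable_prodMk_left).aestronglyMeasurable _
    (ae_of_all _ (abs_uAnd_le T a))

lemma integrable_uOr_left (b : Bid) (μ : Measure Bid) [IsFiniteMeasure μ] :
    Integrable (fun a => uOr v T a b) μ :=
  .of_bound ((measurable_uOr T v).comp measurable_prodMk_right).aestronglyMeasurable _
    (ae_of_all _ fun a => abs_uOr_le T v a b)

lemma integrable_uAnd_prod {μ ν : Measure Bid} (hμ : IsMixed v μ) (hν : IsMixed v ν) :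
    Integrable (fun p : Bid × Bid => uAnd T p.1 p.2) (μ.prod ν) := by
  have := hμ.1; have := hν.1
  refine .of_bound (measurable_uAnd T).aestronglyMeasurable (1 + Hval v + Hval v) ?_
  filter_upwards [Measure.quasiMeasurePreserving_fst.ae hμ.ae_mem_box] with p hp
  have := abs_le_Hval_of_mem_box hp
  exact (abs_uAnd_le T p.1 p.2).trans (by linarith)

lemma integrable_uOr_prod {μ ν : Measure Bid} (hμ : IsMixed v μ) (hν : IsMixed v ν) :
    Integrable (fun p : Bid × Bid => uOr v T p.1 p.2) (μ.prod ν) := by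
  have := hμ.1; have := hν.1
  refine .of_bound (measurable_uOr T v).aestronglyMeasurable (|v| + Hval v + Hval v) ?_
  filter_upwards [Measure.quasiMeasurePreserving_snd.ae hν.ae_mem_box] with p hp
  have := abs_le_Hval_of_mem_box hp
  exact (abs_uOr_le T v p.1 p.2).trans (by linarith)

end Integrability

namespace IsNash

variable {v : ℝ} {T : TieRule} {μ ν : Measure Bid} {x : ℝ}

lemma ae_integral_uAnd_eq (h : IsNash v T μ ν) :
    ∀ᵐ a ∂μ, ∫ b, uAnd T a b ∂ν = UAnd T μ ν := by
  have := h.1.1; have := h.2.1.1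
  have hi := integrable_uAnd_prod T h.1 h.2.1
  exact ae_eq_of_forall_le_of_integral_eq hi.integral_prod_left h.1.ae_mem_box h.2.2.1
    (integral_prod _ hi).symm

lemma ae_integral_uOr_eq (h : IsNash v T μ ν) :
    ∀ᵐ b ∂ν, ∫ a, uOr v T a b ∂μ = UOr v T μ ν := by
  have := h.1.1; have := h.2.1.1
  have hi := integrable_uOr_prod T h.1 h.2.1
  exact ae_eq_of_forall_le_of_integral_eq hi.integral_prod_right h.2.1.ae_mem_box h.2.2.2
    (integral_prod_symm _ hi).symm

lemma and_ae_fst_le (h : IsNash v T μ ν) (hx : ∀ᵐ b ∂ν, b.1 ≤ x) : ∀ᵐ a ∂μ, a.1 ≤ x := by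
  have := h.2.1.1
  have hx0 : 0 ≤ x := by
    obtain ⟨b, hbx, hb⟩ := (hx.and h.2.1.ae_mem_box).exists
    exact hb.1.1.trans hbx
  refine ae_le_of_exists_better h.ae_integral_uAnd_eq h.1.ae_mem_box h.2.2.1 fun a ha hxa =>
    ⟨((x + a.1) / 2, a.2), ⟨⟨by linarith, by linarith [ha.1.2]⟩, ha.2⟩, ?_⟩
  have hy : x < (x + a.1) / 2 := by linarith
  rw [integral_eq_integral_add_of_ae_eq_add (integrable_uAnd_right T a ν)
    (hx.mono fun b hb => uAnd_lower_fst T hb hy hxa)]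
  linarith

lemma and_ae_snd_le (h : IsNash v T μ ν) (hx : ∀ᵐ b ∂ν, b.2 ≤ x) : ∀ᵐ a ∂μ, a.2 ≤ x := by
  have := h.2.1.1
  have hx0 : 0 ≤ x := by
    obtain ⟨b, hbx, hb⟩ := (hx.and h.2.1.ae_mem_box).exists
    exact hb.2.1.trans hbx
  refine ae_le_of_exists_better h.ae_integral_uAnd_eq h.1.ae_mem_box h.2.2.1 fun a ha hxa =>
    ⟨(a.1, (x + a.2) / 2), ⟨ha.1, by linarith, by linarith [ha.2.2]⟩, ?_⟩
  have hy : x < (x + a.2) / 2 := by linarith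
  rw [integral_eq_integral_add_of_ae_eq_add (integrable_uAnd_right T a ν)
    (hx.mono fun b hb => uAnd_lower_snd T hb hy hxa)]
  linarith

lemma or_ae_fst_le (h : IsNash v T μ ν) (hx : ∀ᵐ a ∂μ, a.1 ≤ x) : ∀ᵐ b ∂ν, b.1 ≤ x := by
  have := h.1.1
  have hx0 : 0 ≤ x := by
    obtain ⟨a, hax, ha⟩ := (hx.and h.1.ae_mem_box).exists
    exact ha.1.1.trans hax
  refine ae_le_of_exists_better h.ae_integral_uOr_eq h.2.1.ae_mem_box h.2.2.2 fun b hb hxb =>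
    ⟨((x + b.1) / 2, b.2), ⟨⟨by linarith, by linarith [hb.1.2]⟩, hb.2⟩, ?_⟩
  have hy : x < (x + b.1) / 2 := by linarith
  rw [integral_eq_integral_add_of_ae_eq_add (integrable_uOr_left T b μ)
    (hx.mono fun a ha => uOr_lower_fst T v ha hy hxb)]
  linarith

lemma or_ae_snd_le (h : IsNash v T μ ν) (hx : ∀ᵐ a ∂μ, a.2 ≤ x) : ∀ᵐ b ∂ν, b.2 ≤ x := by
  have := h.1.1
  have hx0 : 0 ≤ x := by
    obtain ⟨a, hax, ha⟩ := (hx.and h.1.ae_mem_box).exists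
    exact ha.2.1.trans hax
  refine ae_le_of_exists_better h.ae_integral_uOr_eq h.2.1.ae_mem_box h.2.2.2 fun b hb hxb =>
    ⟨(b.1, (x + b.2) / 2), ⟨hb.1, by linarith, by linarith [hb.2.2]⟩, ?_⟩
  have hy : x < (x + b.2) / 2 := by linarith
  rw [integral_eq_integral_add_of_ae_eq_add (integrable_uOr_left T b μ)
    (hx.mono fun a ha => uOr_lower_snd T v ha hy hxb)]
  linarith

end IsNash

theorem highest_bids_equal_general (v : ℝ) (T : TieRule)
    (μ ν : Measure Bid) (h : IsNash v T μ ν) :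
    ∀ x : ℝ,
      (μ {p : Bid | p.1 ≤ x} = 1 ↔ ν {p : Bid | p.1 ≤ x} = 1) ∧
      (μ {p : Bid | p.2 ≤ x} = 1 ↔ ν {p : Bid | p.2 ≤ x} = 1) := by
  intro x
  have := h.1.1; have := h.2.1.1
  have hfst : MeasurableSet {p : Bid | p.1 ≤ x} := measurableSet_le measurable_fst measurable_const
  have hsnd : MeasurableSet {p : Bid | p.2 ≤ x} := measurableSet_le measurable_snd measurable_const
  rw [measure_eq_one_iff_ae hfst, measure_eq_one_iff_ae hfst, measure_eq_one_iff_ae hsnd,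
    measure_eq_one_iff_ae hsnd]
  exact ⟨⟨h.or_ae_fst_le, h.and_ae_fst_le⟩, ⟨h.or_ae_snd_le, h.and_ae_snd_le⟩⟩

/-- In any mixed Nash equilibrium `(μ,ν)` with `v > 1/2`, the highest bids
of the two players on each item coincide: `μ{p : p.i ≤ x} = 1 ↔ ν{p : p.i ≤ x} = 1`. -/
theorem highest_bids_equal (v : ℝ) (hv : 1/2 < v) (T : TieRule)
    (μ ν : Measure Bid) (h : IsNash v T μ ν) :
    ∀ x : ℝ,
      (μ {p : Bid | p.1 ≤ x} = 1 ↔ ν {p : Bid | p.1 ≤ x} = 1) ∧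
      (μ {p : Bid | p.2 ≤ x} = 1 ↔ ν {p : Bid | p.2 ≤ x} = 1) :=
  highest_bids_equal_general v T μ ν h
end
end
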